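/- arXiv:1406.3410 — 3 statements merged into one kernel-verified Lean document; each statement's English description precedes it below -/
import Mathlib

section
/- Let A and B be Hermitian N × N complex matrices, with eigenvalues listed with multiplicity, and for a Hermitian matrix M let F_M(ξ) = (1/N)·#{ j : λ_j(M) ≤ ξ } denote its empirical spectral distribution function. Then for every ξ ∈ ℝ, |F_A(ξ) − F_B(ξ)| ≤ rank(A − B)/N. -/
/-!
Let `V` be spanned by the eigenvectors of `A` with eigenvalue `≤ ξ`, `W` by those of `B` with
eigenvalue `> ξ`, and `K = ker (A - B)`. On `V ∩ W ∩ K` the quadratic form `x ↦ ⟪x, A x⟫ = ⟪x, B x⟫`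
is both `≤ ξ ‖x‖²` and `> ξ ‖x‖²` unless `x = 0`, so the three subspaces meet trivially and
`dim V + dim W + dim K ≤ 2N`. With `dim V = N F_A(ξ)`, `dim W = N - N F_B(ξ)` and
`dim K = N - rank (A - B)` this reads `N F_A(ξ) ≤ N F_B(ξ) + rank (A - B)`; swap `A` and `B`.
-/

open Finset Module
open scoped InnerProductSpace

namespace OrthonormalBasis

variable {𝕜 E ι : Type*} [RCLike 𝕜] [NormedAddCommGroup E] [InnerProductSpace 𝕜 E] [Fintype ι]
  (b : OrthonormalBasis ι 𝕜 E)

theorem inner_eq_zero_of_mem_span_image {s : Set ι} {x : E} (hx : x ∈ Submodule.span 𝕜 (b '' s))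
    {i : ι} (hi : i ∉ s) : ⟪b i, x⟫_𝕜 = 0 := by
  obtain ⟨l, hl, rfl⟩ := Finsupp.mem_span_image_iff_linearCombination 𝕜 |>.mp hx
  exact inner_eq_zero_symm.mp (b.orthonormal.inner_finsupp_eq_zero hi hl)

theorem finrank_span_image (s : Finset ι) :
    finrank 𝕜 (Submodule.span 𝕜 (b '' s)) = #s := by
  have := finrank_span_eq_card
    (b.orthonormal.linearIndependent.comp ((↑) : s → ι) Subtype.val_injective)
  rwa [Set.range_comp, Subtype.range_coe_subtype, Fintype.card_coe] at this

end OrthonormalBasis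

namespace LinearMap.IsSymmetric

variable {𝕜 E ι : Type*} [RCLike 𝕜] [NormedAddCommGroup E] [InnerProductSpace 𝕜 E] [Fintype ι]
  {T : E →ₗ[𝕜] E} {b : OrthonormalBasis ι 𝕜 E} {μ : ι → ℝ}

theorem inner_basis_map_eq_mul_inner (hT : T.IsSymmetric)
    (hb : ∀ i, T (b i) = (μ i : 𝕜) • b i) (i : ι) (x : E) : ⟪b i, T x⟫_𝕜 = μ i * ⟪b i, x⟫_𝕜 := by
  rw [← hT, hb, inner_smul_left, RCLike.conj_ofReal]

theorem re_inner_map_self_eq_sum (hT : T.IsSymmetric)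
    (hb : ∀ i, T (b i) = (μ i : 𝕜) • b i) (x : E) :
    RCLike.re ⟪x, T x⟫_𝕜 = ∑ i, μ i * ‖⟪b i, x⟫_𝕜‖ ^ 2 := by
  rw [← b.sum_inner_mul_inner, map_sum]
  refine sum_congr rfl fun i _ => ?_
  rw [inner_basis_map_eq_mul_inner hT hb, ← inner_conj_symm, mul_left_comm, RCLike.conj_mul]
  norm_cast

theorem re_inner_map_self_le_of_mem_span (hT : T.IsSymmetric)
    (hb : ∀ i, T (b i) = (μ i : 𝕜) • b i)
    {ξ : ℝ} {s : Set ι} (hs : ∀ i ∈ s, μ i ≤ ξ) {x : E}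
    (hx : x ∈ Submodule.span 𝕜 (b '' s)) : RCLike.re ⟪x, T x⟫_𝕜 ≤ ξ * ‖x‖ ^ 2 := by
  rw [re_inner_map_self_eq_sum hT hb, ← b.sum_sq_norm_inner_right, mul_sum]
  refine sum_le_sum fun i _ => ?_
  by_cases hi : i ∈ s
  · gcongr
    exact hs i hi
  · simp [b.inner_eq_zero_of_mem_span_image hx hi]

theorem lt_re_inner_map_self_of_mem_span (hT : T.IsSymmetric)
    (hb : ∀ i, T (b i) = (μ i : 𝕜) • b i)
    {ξ : ℝ} {s : Set ι} (hs : ∀ i ∈ s, ξ < μ i) {x : E}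
    (hx : x ∈ Submodule.span 𝕜 (b '' s)) (hx₀ : x ≠ 0) : ξ * ‖x‖ ^ 2 < RCLike.re ⟪x, T x⟫_𝕜 := by
  obtain ⟨i₀, hi₀⟩ : ∃ i, ⟪b i, x⟫_𝕜 ≠ 0 := by
    by_contra! h
    exact hx₀ (by simpa [h] using (b.sum_repr' x).symm)
  have hs₀ : i₀ ∈ s := by_contra fun h => hi₀ (b.inner_eq_zero_of_mem_span_image hx h)
  rw [re_inner_map_self_eq_sum hT hb, ← b.sum_sq_norm_inner_right, mul_sum]
  refine sum_lt_sum (fun i _ => ?_) ⟨i₀, mem_univ _, ?_⟩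
  · by_cases hi : i ∈ s
    · gcongr
      exact (hs i hi).le
    · simp [b.inner_eq_zero_of_mem_span_image hx hi]
  · exact mul_lt_mul_of_pos_right (hs i₀ hs₀) (pow_pos (norm_pos_iff.mpr hi₀) 2)

theorem card_le_card_add_finrank_range_sub [FiniteDimensional 𝕜 E] {κ : Type*} [Fintype κ]
    {S : E →ₗ[𝕜] E} {c : OrthonormalBasis κ 𝕜 E} {ν : κ → ℝ} (hT : T.IsSymmetric)
    (hS : S.IsSymmetric) (hb : ∀ i, T (b i) = (μ i : 𝕜) • b i)
    (hc : ∀ j, S (c j) = (ν j : 𝕜) • c j) (ξ : ℝ) :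
    #{i | μ i ≤ ξ} ≤ #{j | ν j ≤ ξ} + finrank 𝕜 (range (T - S)) := by
  set V := Submodule.span 𝕜 (b '' ↑({i | μ i ≤ ξ} : Finset ι))
  set W := Submodule.span 𝕜 (c '' ↑({j | ¬ν j ≤ ξ} : Finset κ))
  set K := ker (T - S)
  have hdisj : Disjoint V (W ⊓ K) := by
    refine Submodule.disjoint_def.mpr fun x hxV ⟨hxW, hxK⟩ => by_contra fun hx₀ => ?_
    have hTS : T x = S x := sub_eq_zero.mp hxK
    have hle := hT.re_inner_map_self_le_of_mem_span hb (fun i hi => by simpa using hi) hxV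
    have hlt := hS.lt_re_inner_map_self_of_mem_span hc (fun j hj => by simpa using hj) hxW hx₀
    rw [hTS] at hle
    exact hle.not_gt hlt
  have hV := Submodule.finrank_add_finrank_le_of_disjoint hdisj
  have hWK := Submodule.finrank_sup_add_finrank_inf_eq W K
  have hWK_le := (W ⊔ K).finrank_le
  have hK : finrank 𝕜 (range (T - S)) + finrank 𝕜 K = finrank 𝕜 E :=
    (T - S).finrank_range_add_finrank_ker
  have hc_card : #{j | ν j ≤ ξ} + #{j | ¬ν j ≤ ξ} = finrank 𝕜 E := by
    rw [card_filter_add_card_filter_not, card_univ, finrank_eq_card_basis c.toBasis]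
  rw [b.finrank_span_image] at hV
  rw [c.finrank_span_image] at hWK
  omega

end LinearMap.IsSymmetric

namespace Matrix

theorem rank_neg {m n R : Type*} [Fintype n] [CommRing R] (A : Matrix m n R) :
    (-A).rank = A.rank := by
  have : (-A).mulVecLin = -A.mulVecLin := by ext; simp
  rw [rank, this, LinearMap.range_neg, rank]

theorem rank_sub_comm {m n R : Type*} [Fintype n] [CommRing R] (A B : Matrix m n R) :
    (A - B).rank = (B - A).rank := by
  rw [← neg_sub, rank_neg]

variable {𝕜 n : Type*} [RCLike 𝕜] [Fintype n] [DecidableEq n]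

theorem finrank_range_toEuclideanLin (M : Matrix n n 𝕜) :
    finrank 𝕜 (LinearMap.range (toEuclideanLin M)) = M.rank := by
  rw [M.rank_eq_finrank_range_toLin (PiLp.basisFun 2 𝕜 n) (PiLp.basisFun 2 𝕜 n)]
  rfl

theorem IsHermitian.toEuclideanLin_eigenvectorBasis {A : Matrix n n 𝕜} (hA : A.IsHermitian)
    (j : n) :
    toEuclideanLin A (hA.eigenvectorBasis j) = (hA.eigenvalues j : 𝕜) • hA.eigenvectorBasis j := by
  rw [toLpLin_apply, hA.mulVec_eigenvectorBasis, RCLike.real_smul_eq_coe_smul (K := 𝕜)]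
  rfl

theorem IsHermitian.card_eigenvalues_le_le_card_add_rank_sub {A B : Matrix n n 𝕜}
    (hA : A.IsHermitian) (hB : B.IsHermitian) (ξ : ℝ) :
    #{i | hA.eigenvalues i ≤ ξ} ≤ #{i | hB.eigenvalues i ≤ ξ} + (A - B).rank := by
  rw [← finrank_range_toEuclideanLin, map_sub]
  exact (isSymmetric_toEuclideanLin_iff.mpr hA).card_le_card_add_finrank_range_sub
    (isSymmetric_toEuclideanLin_iff.mpr hB) hA.toEuclideanLin_eigenvectorBasis
    hB.toEuclideanLin_eigenvectorBasis ξ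

end Matrix

theorem esd_rank_inequality_general
    (N : ℕ) (A B : Matrix (Fin N) (Fin N) ℂ)
    (hA : A.IsHermitian) (hB : B.IsHermitian) (ξ : ℝ) :
    |((univ.filter fun j => hA.eigenvalues j ≤ ξ).card : ℝ) / N -
      ((univ.filter fun j => hB.eigenvalues j ≤ ξ).card : ℝ) / N| ≤
      ((A - B).rank : ℝ) / N := by
  have hAB := hA.card_eigenvalues_le_le_card_add_rank_sub hB ξ
  have hBA := hB.card_eigenvalues_le_le_card_add_rank_sub hA ξ
  rw [← Matrix.rank_sub_comm] at hBA
  rw [div_sub_div_same, abs_div, Nat.abs_cast]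
  gcongr
  rw [abs_sub_le_iff, sub_le_iff_le_add', sub_le_iff_le_add']
  exact ⟨by exact_mod_cast hAB, by exact_mod_cast hBA⟩

/-- rank inequality for empirical spectral distribution functions of
Hermitian matrices: `|F_A(ξ) - F_B(ξ)| ≤ rank(A - B)/N`. -/
theorem esd_rank_inequality
    (N : ℕ) (hN : 0 < N) (A B : Matrix (Fin N) (Fin N) ℂ)
    (hA : A.IsHermitian) (hB : B.IsHermitian) (ξ : ℝ) :
    |((univ.filter fun j => hA.eigenvalues j ≤ ξ).card : ℝ) / N -
      ((univ.filter fun j => hB.eigenvalues j ≤ ξ).card : ℝ) / N| ≤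
      ((A - B).rank : ℝ) / N :=
  esd_rank_inequality_general N A B hA hB ξ
end

section
/- Let X be a complex-valued random variable with E X = 0 and E|X|² = 1. Let κ > 0 and 0 < δ ≤ 1 be such that E[ |X|² · 1_{|X| ≥ δ√κ} ] ≤ δ. Define the truncated variable X' = X · 1_{|X| ≤ √κ}. Then: (i) |E X'| ≤ δ·κ^{−1/2}; (ii) |E|X'|² − 1| ≤ δ; (iii) for every integer j ≥ 3, E|X'|^j ≤ 2δ·κ^{(j−2)/2}. -/
open MeasureTheory

/-- estimates on the moments of a truncated centred random variable of
unit variance. -/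
theorem truncation_estimates
    (Ω : Type) (mΩ : MeasurableSpace Ω)
    (P : Measure Ω) (hP : IsProbabilityMeasure P)
    (X : Ω → ℂ) (hX : Measurable X)
    (hint1 : Integrable X P) (hmean : ∫ ω, X ω ∂ P = 0)
    (hint2 : Integrable (fun ω => ‖X ω‖ ^ 2) P) (hvar : ∫ ω, ‖X ω‖ ^ 2 ∂ P = 1)
    (κ δ : ℝ) (hκ : 0 < κ) (hδ0 : 0 < δ) (hδ1 : δ ≤ 1)
    (htrunc : ∫ ω in {ω | δ * Real.sqrt κ ≤ ‖X ω‖}, ‖X ω‖ ^ 2 ∂ P ≤ δ) :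
    (‖∫ ω, (if ‖X ω‖ ≤ Real.sqrt κ then X ω else 0) ∂ P‖ ≤ δ * (Real.sqrt κ)⁻¹) ∧
    (|(∫ ω, ‖(if ‖X ω‖ ≤ Real.sqrt κ then X ω else 0)‖ ^ 2 ∂ P) - 1| ≤ δ) ∧
    (∀ j : ℕ, 3 ≤ j →
      ∫ ω, ‖(if ‖X ω‖ ≤ Real.sqrt κ then X ω else 0)‖ ^ j ∂ P ≤
        2 * δ * Real.sqrt κ ^ (j - 2)) := by
  classical
  set c := Real.sqrt κ with hc
  have hc0 : 0 < c := Real.sqrt_pos.2 hκ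
  set s : Set Ω := {ω | ‖X ω‖ ≤ c} with hsdef
  set A : Set Ω := {ω | δ * c ≤ ‖X ω‖} with hAdef
  have hs : MeasurableSet s := measurableSet_le hX.norm measurable_const
  have hA : MeasurableSet A := measurableSet_le measurable_const hX.norm
  have hsub : sᶜ ⊆ A := by
    intro ω hω
    simp only [Set.mem_compl_iff, Set.mem_setOf_eq, not_le, hsdef] at hω
    simp only [Set.mem_setOf_eq, hAdef]
    nlinarith
  have hAle : ∫ ω in sᶜ, ‖X ω‖ ^ 2 ∂ P ≤ δ := by
    refine le_trans ?_ htrunc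
    refine setIntegral_mono_set hint2.integrableOn ?_ (HasSubset.Subset.eventuallyLE hsub)
    filter_upwards with ω using sq_nonneg _
  refine ⟨?_, ?_, ?_⟩
  · -- part (i)
    have hind : (fun ω => if ‖X ω‖ ≤ c then X ω else 0) = s.indicator X := by
      funext ω; simp [Set.indicator, hsdef, Set.mem_setOf_eq]
    have h1 : ∫ ω, (if ‖X ω‖ ≤ c then X ω else 0) ∂ P = ∫ ω in s, X ω ∂ P := by
      rw [hind, integral_indicator hs]
    have hsplit : (∫ ω in s, X ω ∂ P) + (∫ ω in sᶜ, X ω ∂ P) = 0 := by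
      rw [integral_add_compl hs hint1, hmean]
    have h2 : ∫ ω in s, X ω ∂ P = - ∫ ω in sᶜ, X ω ∂ P :=
      eq_neg_of_add_eq_zero_left hsplit
    rw [h1, h2, norm_neg]
    calc ‖∫ ω in sᶜ, X ω ∂ P‖ ≤ ∫ ω in sᶜ, ‖X ω‖ ∂ P := norm_integral_le_integral_norm _
      _ ≤ ∫ ω in sᶜ, c⁻¹ * ‖X ω‖ ^ 2 ∂ P := by
          refine setIntegral_mono_on hint1.norm.integrableOn
            ((hint2.const_mul c⁻¹).integrableOn) hs.compl ?_
          intro ω hω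
          simp only [Set.mem_compl_iff, Set.mem_setOf_eq, not_le, hsdef] at hω
          have h := mul_inv_cancel₀ hc0.ne'
          nlinarith [norm_nonneg (X ω)]
      _ = c⁻¹ * ∫ ω in sᶜ, ‖X ω‖ ^ 2 ∂ P := integral_const_mul _ _
      _ ≤ c⁻¹ * δ := by
          apply mul_le_mul_of_nonneg_left hAle (by positivity)
      _ = δ * c⁻¹ := mul_comm _ _
  · -- part (ii)
    have hind2 : (fun ω => ‖(if ‖X ω‖ ≤ c then X ω else 0)‖ ^ 2)
        = s.indicator (fun ω => ‖X ω‖ ^ 2) := by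
      funext ω
      rw [Set.indicator_apply]
      simp only [hsdef, Set.mem_setOf_eq]
      by_cases h : ‖X ω‖ ≤ c
      · rw [if_pos h, if_pos h]
      · rw [if_neg h, if_neg h, norm_zero, zero_pow two_ne_zero]
    have h1 : ∫ ω, ‖(if ‖X ω‖ ≤ c then X ω else 0)‖ ^ 2 ∂ P
        = ∫ ω in s, ‖X ω‖ ^ 2 ∂ P := by rw [hind2, integral_indicator hs]
    have hsplit : (∫ ω in s, ‖X ω‖ ^ 2 ∂ P) + (∫ ω in sᶜ, ‖X ω‖ ^ 2 ∂ P) = 1 := by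
      rw [integral_add_compl hs hint2, hvar]
    have hnn : 0 ≤ ∫ ω in sᶜ, ‖X ω‖ ^ 2 ∂ P :=
      setIntegral_nonneg hs.compl (fun ω _ => sq_nonneg _)
    rw [h1, abs_le]
    constructor <;> linarith
  · -- part (iii)
    intro j hj
    set g : Ω → ℝ := fun ω =>
      δ * c ^ (j - 2) * ‖X ω‖ ^ 2 + c ^ (j - 2) * A.indicator (fun ω => ‖X ω‖ ^ 2) ω
      with hg
    have hgint : Integrable g P :=
      ((hint2.const_mul _).add (((hint2.indicator hA).const_mul _)))
    have hfmeas : Measurable (fun ω => ‖(if ‖X ω‖ ≤ c then X ω else 0)‖ ^ j) := by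
      apply Measurable.pow_const
      exact (Measurable.ite (measurableSet_le hX.norm measurable_const) hX
        measurable_const).norm
    have hfint : Integrable (fun ω => ‖(if ‖X ω‖ ≤ c then X ω else 0)‖ ^ j) P := by
      apply Integrable.mono' (integrable_const (c ^ j)) hfmeas.aestronglyMeasurable
      filter_upwards with ω
      rw [Real.norm_eq_abs, abs_of_nonneg (by positivity)]
      by_cases h : ‖X ω‖ ≤ c
      · simp only [h, if_true]
        exact pow_le_pow_left₀ (norm_nonneg _) h j
      · simp only [h, if_false, norm_zero]
        exact le_of_eq (by rw [zero_pow (by omega)]) |>.trans (by positivity)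
    have hpt : ∀ ω, ‖(if ‖X ω‖ ≤ c then X ω else 0)‖ ^ j ≤ g ω := by
      intro ω
      have hindnn : 0 ≤ A.indicator (fun ω => ‖X ω‖ ^ 2) ω :=
        Set.indicator_nonneg (fun ω _ => sq_nonneg _) ω
      by_cases h : ‖X ω‖ ≤ c
      · simp only [h, if_true, hg]
        have hjsplit : ‖X ω‖ ^ j = ‖X ω‖ ^ (j - 2) * ‖X ω‖ ^ 2 := by
          rw [← pow_add]; congr 1; omega
        by_cases h2 : δ * c ≤ ‖X ω‖
        · have hmem : ω ∈ A := by rw [hAdef]; exact h2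
          rw [Set.indicator_of_mem hmem]
          have : ‖X ω‖ ^ (j - 2) ≤ c ^ (j - 2) := pow_le_pow_left₀ (norm_nonneg _) h _
          nlinarith [sq_nonneg (‖X ω‖), mul_nonneg hδ0.le (pow_nonneg hc0.le (j-2)),
            mul_le_mul_of_nonneg_right this (sq_nonneg (‖X ω‖))]
        · push_neg at h2
          have h3 : ‖X ω‖ ^ (j - 2) ≤ (δ * c) ^ (j - 2) :=
            pow_le_pow_left₀ (norm_nonneg _) h2.le _
          have h4 : (δ * c) ^ (j - 2) = δ ^ (j - 2) * c ^ (j - 2) := mul_pow _ _ _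
          have h5 : δ ^ (j - 2) ≤ δ := pow_le_of_le_one hδ0.le hδ1 (by omega)
          have h6 : ‖X ω‖ ^ (j - 2) ≤ δ * c ^ (j - 2) := by
            rw [h4] at h3
            exact h3.trans (mul_le_mul_of_nonneg_right h5 (by positivity))
          nlinarith [mul_le_mul_of_nonneg_right h6 (sq_nonneg (‖X ω‖)),
            mul_nonneg (pow_nonneg hc0.le (j-2)) hindnn]
      · simp only [h, if_false, norm_zero, zero_pow (show j ≠ 0 by omega), hg]
        positivity
    calc ∫ ω, ‖(if ‖X ω‖ ≤ c then X ω else 0)‖ ^ j ∂ P ≤ ∫ ω, g ω ∂ P :=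
          integral_mono hfint hgint hpt
      _ = δ * c ^ (j - 2) * (∫ ω, ‖X ω‖ ^ 2 ∂ P)
          + c ^ (j - 2) * ∫ ω in A, ‖X ω‖ ^ 2 ∂ P := by
          rw [hg, integral_add (hint2.const_mul _) ((hint2.indicator hA).const_mul _),
            integral_const_mul, integral_const_mul, integral_indicator hA]
      _ ≤ δ * c ^ (j - 2) * 1 + c ^ (j - 2) * δ := by
          rw [hvar]
          gcongr
      _ = 2 * δ * c ^ (j - 2) := by ring
end

section
/- Non-backtracking path expansion: let G = (V, E) be a finite simple κ-regular graph with κ ≥ 2, and let H = (H(u,v))_{u,v ∈ V} be a Hermitian complex matrix satisfying the unimodality condition |H(u,v)| = 1 if {u,v} ∈ E and H(u,v) = 0 otherwise (in particular the diagonal vanishes). Then for every n ≥ 0 and all u, v ∈ V, the (u,v) entry of the matrix P_n^{(κ)}(H/(2√(κ−1))) (the polynomial P_n^{(κ)} evaluated at the matrix H/(2√(κ−1))) equals the sum, over all paths u = u_0, u_1, …, u_{n−1}, u_n = v in G with {u_j, u_{j+1}} ∈ E for 0 ≤ j ≤ n−1 and satisfying the non-backtracking condition u_j ≠ u_{j+2}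 for 0 ≤ j ≤ n−2, of the products ∏_{j=0}^{n−1} H(u_j, u_{j+1})/√(κ−1). -/
/-!
Let `A_n(u, v)` be the sum of `∏ H(u_j, u_{j+1})` over non-backtracking walks of length `n`
from `u` to `v`. Splitting off the first step of a walk and removing the walks whose second
step returns to the start, each of which contributes `H(u, x) H(x, u) = |H(u, x)|² = 1` times a
shorter walk, gives `A_0 = 1`, `A_1 = H`, `A_2 = H² - κ` and `A_{n+1} = H A_n - (κ - 1) A_{n-1}`
for `n ≥ 2`. The polynomials satisfy `P_{n+1} = 2X P_n - P_{n-1}` for `n ≥ 2` and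
`P_2 = 2X P_1 - P_0 - (κ - 1)⁻¹`, so `P_n(H / (2√(κ - 1)))` and `(κ - 1)^{-n/2} A_n` obey the
same recursion with the same initial values.
-/

open Polynomial

/-- The polynomials `P_n^{(κ)} = U_n - (κ-1)⁻¹ U_{n-2}` (with `P_0 = 1`, `P_1 = U_1`),
where `U_n` is the Chebyshev polynomial of the second kind. -/
noncomputable def Pkappa (κ : ℝ) : ℕ → Polynomial ℝ
  | 0 => 1
  | 1 => Chebyshev.U ℝ 1
  | (n + 2) => Chebyshev.U ℝ ((n : ℤ) + 2) - Polynomial.C (κ - 1)⁻¹ * Chebyshev.U ℝ (n : ℤ)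

open Finset

section Pkappa

variable (κ : ℝ)

-- For `n = 0` this uses `U (-1) = 0`.
theorem Pkappa_succ (n : ℕ) :
    Pkappa κ (n + 1) = Chebyshev.U ℝ (n + 1) - C (κ - 1)⁻¹ * Chebyshev.U ℝ (n - 1) := by
  rcases n with _ | n
  · simp [Pkappa]
  · simp only [Pkappa]
    push_cast
    ring_nf

theorem Pkappa_two : Pkappa κ 2 = 2 * X * Pkappa κ 1 - Pkappa κ 0 - C (κ - 1)⁻¹ := by
  simp only [Pkappa, Chebyshev.U_one, Chebyshev.U_zero, Nat.cast_zero, zero_add, Chebyshev.U_two]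
  ring

theorem Pkappa_add_three (n : ℕ) :
    Pkappa κ (n + 3) = 2 * X * Pkappa κ (n + 2) - Pkappa κ (n + 1) := by
  rw [Pkappa_succ, Pkappa_succ, Pkappa_succ]
  generalize C (κ - 1)⁻¹ = c
  have hU₁ := Chebyshev.U_add_two ℝ (n + 1)
  have hU₂ := Chebyshev.U_add_two ℝ (n - 1)
  push_cast
  ring_nf at hU₁ hU₂ ⊢
  linear_combination hU₁ - c * hU₂

variable {κ}

theorem aeval_Pkappa_of_recurrence {A : Type*} [Ring A] [Algebra ℝ A] (hκ : 1 < κ)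
    (h : A) (a : ℕ → A) (h₀ : a 0 = 1) (h₁ : a 1 = h) (h₂ : a 2 = h * a 1 - κ • a 0)
    (h₃ : ∀ n, a (n + 3) = h * a (n + 2) - (κ - 1) • a (n + 1)) (n : ℕ) :
    aeval ((2 * √(κ - 1))⁻¹ • h) (Pkappa κ n) = (√(κ - 1) ^ n)⁻¹ • a n := by
  set s := √(κ - 1)
  have hs : s ≠ 0 := (Real.sqrt_pos.2 (sub_pos.2 hκ)).ne'
  have hs2 : s ^ 2 = κ - 1 := Real.sq_sqrt (sub_pos.2 hκ).le
  have hX (p : ℝ[X]) :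
      aeval ((2 * s)⁻¹ • h) (2 * X * p) = s⁻¹ • (h * aeval ((2 * s)⁻¹ • h) p) := by
    rw [map_mul, map_mul, aeval_X, map_ofNat, mul_smul_comm, smul_mul_assoc, mul_assoc,
      two_mul (h * _)]
    module
  induction n using Nat.strongRecOn with
  | ind n ih =>
  match n, ih with
  | 0, _ => simp [Pkappa, h₀]
  | 1, _ =>
    rw [show Pkappa κ 1 = 2 * X * 1 by simp [Pkappa], hX, map_one, mul_one, h₁, pow_one]
  | 2, ih =>
    rw [Pkappa_two, map_sub, map_sub, hX, ih 1 (by norm_num), ih 0 (by norm_num), h₂, h₁, h₀,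
      aeval_C, Algebra.algebraMap_eq_smul_one, mul_smul_comm]
    match_scalars
    · field_simp
    · rw [← hs2]
      field_simp
      linarith
  | n + 3, ih =>
    rw [Pkappa_add_three, map_sub, hX, ih (n + 2) (by omega), ih (n + 1) (by omega), h₃,
      mul_smul_comm, smul_smul, smul_sub, smul_smul]
    match_scalars
    · field_simp
      ring
    · rw [← hs2]
      field_simp
      ring

end Pkappa

namespace Matrix

variable {V : Type*}

theorem IsHermitian.apply_mul_apply_swap {𝕜 : Type*} [RCLike 𝕜] {H : Matrix V V 𝕜}
    (hH : H.IsHermitian) (x y : V) : H x y * H y x = (‖H x y‖ : 𝕜) ^ 2 := by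
  rw [← hH.apply y x, ← RCLike.mul_conj, RCLike.star_def]

variable {R : Type*} [CommMonoid R] (H : Matrix V V R)

def walkProd {n : ℕ} (p : Fin (n + 1) → V) : R :=
  ∏ j : Fin n, H (p j.castSucc) (p j.succ)

theorem walkProd_cons {n : ℕ} (x : V) (q : Fin (n + 1) → V) :
    H.walkProd (Fin.cons x q : Fin (n + 2) → V) = H x (q 0) * H.walkProd q :=
  Fin.prod_univ_succ _

end Matrix

namespace SimpleGraph

variable {V : Type*} (G : SimpleGraph V)

def IsNonBacktrackingWalk {n : ℕ} (p : Fin (n + 1) → V) : Prop :=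
  (∀ j : Fin n, G.Adj (p j.castSucc) (p j.succ)) ∧
    ∀ (j : ℕ) (h : j + 2 ≤ n), p ⟨j, by omega⟩ ≠ p ⟨j + 2, by omega⟩

theorem isNonBacktrackingWalk_cons {n : ℕ} (x : V) (q : Fin (n + 1) → V) :
    G.IsNonBacktrackingWalk (Fin.cons x q : Fin (n + 2) → V) ↔
      G.Adj x (q 0) ∧ (∀ h : 1 ≤ n, x ≠ q ⟨1, by omega⟩) ∧ G.IsNonBacktrackingWalk q := by
  have hsucc (j : ℕ) (h : j + 1 < n + 2) :
      (Fin.cons x q : Fin (n + 2) → V) ⟨j + 1, h⟩ = q ⟨j, by omega⟩ :=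
    Fin.cons_succ (α := fun _ => V) x q ⟨j, by omega⟩
  have hback : (∀ (j : ℕ) (h : j + 2 ≤ n + 1), (Fin.cons x q : Fin (n + 2) → V) ⟨j, by omega⟩ ≠
        (Fin.cons x q : Fin (n + 2) → V) ⟨j + 2, by omega⟩) ↔
      (∀ h : 1 ≤ n, x ≠ q ⟨1, by omega⟩) ∧
        ∀ (j : ℕ) (h : j + 2 ≤ n), q ⟨j, by omega⟩ ≠ q ⟨j + 2, by omega⟩ := by
    constructor
    · intro h
      exact ⟨fun _ => by simpa [hsucc] using h 0 (by omega),
        fun j _ => by simpa [hsucc] using h (j + 1) (by omega)⟩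
    · rintro ⟨h₀, h⟩ (_ | j) hj
      · simpa [hsucc] using h₀ (by omega)
      · simpa [hsucc] using h j (by omega)
  simp only [IsNonBacktrackingWalk, Fin.forall_fin_succ, Fin.castSucc_zero, Fin.cons_zero,
    ← Fin.succ_castSucc, Fin.cons_succ, hback]
  tauto

variable [Fintype V]

/- `a` plays the role of the vertex visited just before `u`: forbidding the first step to go
back to it is what makes these sets decompose along the first step. -/
open scoped Classical in
noncomputable def nbWalksAvoiding (n : ℕ) (a u v : V) : Finset (Fin (n + 1) → V) :=
  univ.filter fun p => p 0 = u ∧ p (Fin.last n) = v ∧ G.IsNonBacktrackingWalk p ∧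
    ∀ h : 1 ≤ n, p ⟨1, by omega⟩ ≠ a

theorem mem_nbWalksAvoiding {n : ℕ} {a u v : V} {p : Fin (n + 1) → V} :
    p ∈ G.nbWalksAvoiding n a u v ↔ p 0 = u ∧ p (Fin.last n) = v ∧ G.IsNonBacktrackingWalk p ∧
      ∀ h : 1 ≤ n, p ⟨1, by omega⟩ ≠ a := by
  classical
  rw [nbWalksAvoiding, mem_filter, and_iff_right (mem_univ p)]

theorem head_eq_of_mem_nbWalksAvoiding {n : ℕ} {a u v : V} {p : Fin (n + 1) → V}
    (hp : p ∈ G.nbWalksAvoiding n a u v) : p 0 = u :=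
  (G.mem_nbWalksAvoiding.1 hp).1

theorem cons_mem_nbWalksAvoiding {n : ℕ} {a u v x : V} {q : Fin (n + 1) → V} :
    (Fin.cons x q : Fin (n + 2) → V) ∈ G.nbWalksAvoiding (n + 1) a u v ↔
      x = u ∧ G.Adj u (q 0) ∧ q 0 ≠ a ∧ q ∈ G.nbWalksAvoiding n u (q 0) v := by
  have hlast : (Fin.cons x q : Fin (n + 2) → V) (Fin.last (n + 1)) = q (Fin.last n) := by
    rw [← Fin.succ_last, Fin.cons_succ]
  have hone : (Fin.cons x q : Fin (n + 2) → V) ⟨1, by omega⟩ = q 0 :=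
    Fin.cons_succ (α := fun _ => V) x q 0
  simp only [mem_nbWalksAvoiding, Fin.cons_zero, hlast, hone, isNonBacktrackingWalk_cons,
    true_and]
  constructor
  · rintro ⟨rfl, hv, ⟨hadj, hback, hq⟩, ha⟩
    exact ⟨rfl, hadj, ha (by omega), hv, hq, fun h => (hback h).symm⟩
  · rintro ⟨rfl, hadj, ha, hv, hq, hback⟩
    exact ⟨rfl, hv, ⟨hadj, fun h => (hback h).symm, hq⟩, fun _ => ha⟩

theorem nbWalksAvoiding_zero [DecidableEq V] (a u v : V) :
    G.nbWalksAvoiding 0 a u v = if u = v then {fun _ => u} else ∅ := by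
  ext p
  have hconst : p = (fun _ => u) ↔ p 0 = u :=
    ⟨fun h => h ▸ rfl, fun h => funext fun i => Fin.fin_one_eq_zero i ▸ h⟩
  have hmem : p ∈ G.nbWalksAvoiding 0 a u v ↔ p 0 = u ∧ p 0 = v := by
    rw [mem_nbWalksAvoiding, IsNonBacktrackingWalk, Fin.last_zero]
    exact ⟨fun h => ⟨h.1, h.2.1⟩, fun h => ⟨h.1, h.2, ⟨finZeroElim, fun _ h => by omega⟩,
      fun h => by omega⟩⟩
  split_ifs with huv
  · rw [hmem, mem_singleton, hconst, huv, and_self]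
  · rw [hmem, iff_false_intro (notMem_empty p), iff_false]
    exact fun h => huv (h.1.symm.trans h.2)

variable {R : Type*} [CommRing R] (H : Matrix V V R)

noncomputable def nbWalkSum (n : ℕ) (a u v : V) : R :=
  ∑ p ∈ G.nbWalksAvoiding n a u v, H.walkProd p

theorem nbWalkSum_zero [DecidableEq V] (a u v : V) :
    G.nbWalkSum H 0 a u v = (1 : Matrix V V R) u v := by
  rw [nbWalkSum, nbWalksAvoiding_zero, Matrix.one_apply]
  split_ifs <;> simp [Matrix.walkProd]

theorem nbWalkSum_succ [DecidableEq V] [DecidableRel G.Adj] (n : ℕ) (a u v : V) :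
    G.nbWalkSum H (n + 1) a u v =
      ∑ y ∈ (G.neighborFinset u).erase a, H u y * G.nbWalkSum H n u y v := by
  simp only [nbWalkSum, mul_sum]
  rw [sum_sigma']
  refine sum_nbij' (fun p => ⟨Fin.tail p 0, Fin.tail p⟩) (fun yq => Fin.cons u yq.2)
    ?_ ?_ ?_ ?_ ?_
  · intro p hp
    rw [← Fin.cons_self_tail p, cons_mem_nbWalksAvoiding] at hp
    obtain ⟨-, hadj, ha, hq⟩ := hp
    rw [mem_sigma, mem_erase, mem_neighborFinset]
    exact ⟨⟨ha, hadj⟩, hq⟩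
  · rintro ⟨y, q⟩ hyq
    rw [mem_sigma, mem_erase, mem_neighborFinset] at hyq
    obtain ⟨⟨ha, hadj⟩, hq⟩ := hyq
    have hq0 : q 0 = y := G.head_eq_of_mem_nbWalksAvoiding hq
    subst hq0
    rw [cons_mem_nbWalksAvoiding]
    exact ⟨rfl, hadj, ha, hq⟩
  · intro p hp
    rw [← G.head_eq_of_mem_nbWalksAvoiding hp]
    exact Fin.cons_self_tail p
  · rintro ⟨y, q⟩ hyq
    have hq0 : q 0 = y := G.head_eq_of_mem_nbWalksAvoiding (mem_sigma.1 hyq).2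
    subst hq0
    rfl
  · intro p hp
    rw [← Fin.cons_self_tail p, Matrix.walkProd_cons, G.head_eq_of_mem_nbWalksAvoiding hp]
    rfl

noncomputable def nbMatrix (n : ℕ) : Matrix V V R :=
  Matrix.of fun u v => G.nbWalkSum H n u u v

theorem nbMatrix_apply (n : ℕ) (u v : V) [DecidablePred fun p : Fin (n + 1) → V =>
      p 0 = u ∧ p (Fin.last n) = v ∧ G.IsNonBacktrackingWalk p] :
    G.nbMatrix H n u v = ∑ p ∈ univ.filter (fun p : Fin (n + 1) → V =>
      p 0 = u ∧ p (Fin.last n) = v ∧ G.IsNonBacktrackingWalk p), H.walkProd p := by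
  refine sum_congr (ext fun p => ?_) fun _ _ => rfl
  rw [mem_nbWalksAvoiding, mem_filter, and_iff_right (mem_univ p)]
  refine ⟨fun ⟨hu, hv, hp, _⟩ => ⟨hu, hv, hp⟩, fun ⟨hu, hv, hp⟩ => ⟨hu, hv, hp, fun h => ?_⟩⟩
  have hadj := hp.1 ⟨0, h⟩
  rw [← hu]
  exact hadj.ne'

theorem nbMatrix_zero [DecidableEq V] : G.nbMatrix H 0 = 1 := by
  ext u v
  exact G.nbWalkSum_zero H u u v

variable [DecidableRel G.Adj] {H}

theorem sum_mul_eq_sum_neighborFinset (hH : ∀ x y, ¬G.Adj x y → H x y = 0) (u : V)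
    (g : V → R) : ∑ x, H u x * g x = ∑ x ∈ G.neighborFinset u, H u x * g x :=
  (sum_subset (subset_univ _) fun x _ hx => by
    rw [hH u x (by simpa using hx), zero_mul]).symm

variable [DecidableEq V]

theorem nbWalkSum_succ_eq_sub (hH : ∀ x y, ¬G.Adj x y → H x y = 0) (n : ℕ) (a u v : V) :
    G.nbWalkSum H (n + 1) a u v =
      ∑ y, H u y * G.nbWalkSum H n u y v - H u a * G.nbWalkSum H n u a v := by
  rw [nbWalkSum_succ, G.sum_mul_eq_sum_neighborFinset hH]
  by_cases ha : a ∈ G.neighborFinset u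
  · rw [sum_erase_eq_sub ha]
  · rw [erase_eq_of_notMem ha, hH u a (by simpa using ha), zero_mul, sub_zero]

theorem nbMatrix_succ_apply (hH : ∀ x y, ¬G.Adj x y → H x y = 0) (n : ℕ) (u v : V) :
    G.nbMatrix H (n + 1) u v = ∑ y, H u y * G.nbWalkSum H n u y v := by
  rw [nbMatrix, Matrix.of_apply, G.nbWalkSum_succ_eq_sub hH, hH u u (G.irrefl), zero_mul,
    sub_zero]

theorem nbWalkSum_succ_eq_nbMatrix_sub (hH : ∀ x y, ¬G.Adj x y → H x y = 0) (n : ℕ)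
    (a u v : V) :
    G.nbWalkSum H (n + 1) a u v = G.nbMatrix H (n + 1) u v - H u a * G.nbWalkSum H n u a v := by
  rw [G.nbWalkSum_succ_eq_sub hH, G.nbMatrix_succ_apply hH]

theorem nbMatrix_one (hH : ∀ x y, ¬G.Adj x y → H x y = 0) : G.nbMatrix H 1 = H := by
  ext u v
  simp_rw [G.nbMatrix_succ_apply hH, nbWalkSum_zero, ← Matrix.mul_apply, Matrix.mul_one]

theorem nbMatrix_add_two_apply (hH : ∀ x y, ¬G.Adj x y → H x y = 0)
    (hunit : ∀ x y, G.Adj x y → H x y * H y x = 1) (n : ℕ) (u v : V) :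
    G.nbMatrix H (n + 2) u v =
      (H * G.nbMatrix H (n + 1)) u v - ∑ a ∈ G.neighborFinset u, G.nbWalkSum H n a u v := by
  have hreturn : ∑ x, H u x * (H x u * G.nbWalkSum H n x u v) =
      ∑ a ∈ G.neighborFinset u, G.nbWalkSum H n a u v := by
    rw [G.sum_mul_eq_sum_neighborFinset hH]
    refine sum_congr rfl fun x hx => ?_
    rw [← mul_assoc, hunit u x ((G.mem_neighborFinset u x).1 hx), one_mul]
  simp_rw [G.nbMatrix_succ_apply hH, G.nbWalkSum_succ_eq_nbMatrix_sub hH, mul_sub,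
    sum_sub_distrib, hreturn, Matrix.mul_apply]

theorem sum_neighborFinset_nbWalkSum_zero {κ : ℕ} (hreg : G.IsRegularOfDegree κ) (u v : V) :
    ∑ a ∈ G.neighborFinset u, G.nbWalkSum H 0 a u v = κ * (1 : Matrix V V R) u v := by
  simp_rw [nbWalkSum_zero, sum_const, card_neighborFinset_eq_degree, hreg u, nsmul_eq_mul]

theorem sum_neighborFinset_nbWalkSum_succ {κ : ℕ} (hreg : G.IsRegularOfDegree κ)
    (hH : ∀ x y, ¬G.Adj x y → H x y = 0) (n : ℕ) (u v : V) :
    ∑ a ∈ G.neighborFinset u, G.nbWalkSum H (n + 1) a u v =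
      (κ - 1) * G.nbMatrix H (n + 1) u v := by
  simp_rw [G.nbWalkSum_succ_eq_nbMatrix_sub hH, sum_sub_distrib, sum_const,
    card_neighborFinset_eq_degree, hreg u, nsmul_eq_mul,
    ← G.sum_mul_eq_sum_neighborFinset hH, ← G.nbMatrix_succ_apply hH]
  ring

theorem nbMatrix_two {κ : ℕ} (hreg : G.IsRegularOfDegree κ)
    (hH : ∀ x y, ¬G.Adj x y → H x y = 0) (hunit : ∀ x y, G.Adj x y → H x y * H y x = 1) :
    G.nbMatrix H 2 = H * G.nbMatrix H 1 - (κ : R) • G.nbMatrix H 0 := by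
  ext u v
  rw [G.nbMatrix_add_two_apply hH hunit, G.sum_neighborFinset_nbWalkSum_zero hreg,
    nbMatrix_zero, Matrix.sub_apply, Matrix.smul_apply, smul_eq_mul]

theorem nbMatrix_add_three {κ : ℕ} (hreg : G.IsRegularOfDegree κ)
    (hH : ∀ x y, ¬G.Adj x y → H x y = 0) (hunit : ∀ x y, G.Adj x y → H x y * H y x = 1)
    (n : ℕ) :
    G.nbMatrix H (n + 3) = H * G.nbMatrix H (n + 2) - ((κ : R) - 1) • G.nbMatrix H (n + 1) := by
  ext u v
  rw [G.nbMatrix_add_two_apply hH hunit, G.sum_neighborFinset_nbWalkSum_succ hreg hH,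
    Matrix.sub_apply, Matrix.smul_apply, smul_eq_mul]

end SimpleGraph

/-- non-backtracking path expansion. For a κ-regular graph and a
Hermitian matrix with unimodular entries supported on the edges, the entries of
`P_n^{(κ)}(H/(2√(κ-1)))` are sums over non-backtracking paths. -/
theorem nonbacktracking_path_expansion
    (V : Type) [Fintype V] [DecidableEq V]
    (G : SimpleGraph V) [DecidableRel G.Adj]
    (κ : ℕ) (hκ : 2 ≤ κ) (hreg : G.IsRegularOfDegree κ)
    (H : Matrix V V ℂ) (hherm : H.IsHermitian)
    (hmod1 : ∀ u v : V, G.Adj u v → ‖H u v‖ = 1)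
    (hmod0 : ∀ u v : V, ¬ G.Adj u v → H u v = 0)
    (n : ℕ) (u v : V) :
    (Polynomial.aeval ((((2 * Real.sqrt ((κ : ℝ) - 1)) : ℝ) : ℂ)⁻¹ • H)
        (Pkappa (κ : ℝ) n)) u v =
      ∑ p ∈ @Finset.filter _
          (fun p : Fin (n + 1) → V =>
            p 0 = u ∧ p (Fin.last n) = v ∧
            (∀ j : Fin n, G.Adj (p j.castSucc) (p j.succ)) ∧
            (∀ (j : ℕ) (h : j + 2 ≤ n), p ⟨j, by omega⟩ ≠ p ⟨j + 2, by omega⟩))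
          (Classical.decPred _) Finset.univ,
        ∏ j : Fin n, H (p j.castSucc) (p j.succ) / ((Real.sqrt ((κ : ℝ) - 1) : ℝ) : ℂ) := by
  have hunit (x y : V) (hxy : G.Adj x y) : H x y * H y x = 1 := by
    rw [hherm.apply_mul_apply_swap, hmod1 x y hxy]
    norm_num
  have h₂ : G.nbMatrix H 2 = H * G.nbMatrix H 1 - (κ : ℝ) • G.nbMatrix H 0 := by
    rw [G.nbMatrix_two hreg hmod0 hunit, ← Complex.coe_smul, Complex.ofReal_natCast]
  have h₃ (m : ℕ) : G.nbMatrix H (m + 3) =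
      H * G.nbMatrix H (m + 2) - ((κ : ℝ) - 1) • G.nbMatrix H (m + 1) := by
    rw [G.nbMatrix_add_three hreg hmod0 hunit, ← Complex.coe_smul]
    push_cast
    rfl
  rw [← Complex.ofReal_inv, Complex.coe_smul, aeval_Pkappa_of_recurrence (by exact_mod_cast hκ)
    H (G.nbMatrix H) (G.nbMatrix_zero H) (G.nbMatrix_one hmod0) h₂ h₃, Matrix.smul_apply,
    @SimpleGraph.nbMatrix_apply _ G _ _ _ H n u v (Classical.decPred _)]
  simp_rw [prod_div_distrib, prod_const, card_univ, Fintype.card_fin, ← sum_div,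
    Complex.real_smul, div_eq_inv_mul]
  push_cast
  rfl
end
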